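/- Let V be a finite set partitioned into color classes V₁, …, V_C with natural-number bounds ℓ_c ≤ u_c, and let a matroid with rank function r be given on V. Let P = { x ∈ ℝ^V : x ≥ 0 and Σ_{e ∈ A} x_e ≤ r(A) for all A ⊆ V } and P_F = { x ∈ [0,1]^V : ℓ_c ≤ Σ_{e ∈ V_c} x_e ≤ u_c for all c }. Then the convex hull of the indicator vectors of the feasible sets (sets S that are independent in the matroid and satisfy ℓ_c ≤ |S ∩ V_c| ≤ u_c for all c) equals P_F ∩ P. -/

import Mathlib

structure FinMatroid (V : Type*) [DecidableEq V] where
  Indep : Finset V → Prop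
  empty_indep : Indep ∅
  subset_indep : ∀ ⦃A B : Finset V⦄, A ⊆ B → Indep B → Indep A
  augment : ∀ ⦃A B : Finset V⦄, Indep A → Indep B → A.card < B.card →
    ∃ e ∈ B, e ∉ A ∧ Indep (insert e A)

noncomputable def FinMatroid.rank {V : Type*} [DecidableEq V]
    (M : FinMatroid V) (A : Finset V) : ℕ :=
  sSup {n : ℕ | ∃ I ⊆ A, M.Indep I ∧ I.card = n}

namespace FinMatroid
variable {V : Type*} [DecidableEq V] (M : FinMatroid V)

lemma bdd (A : Finset V) : BddAbove {n : ℕ | ∃ I ⊆ A, M.Indep I ∧ I.card = n} := by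
  refine ⟨A.card, fun n hn => ?_⟩
  obtain ⟨I, hIA, _, rfl⟩ := hn
  exact Finset.card_le_card hIA

lemma rank_spec (A : Finset V) : ∃ I ⊆ A, M.Indep I ∧ I.card = M.rank A := by
  have hne : {n : ℕ | ∃ I ⊆ A, M.Indep I ∧ I.card = n}.Nonempty :=
    ⟨0, ∅, Finset.empty_subset _, M.empty_indep, Finset.card_empty⟩
  exact Nat.sSup_mem hne (M.bdd A)

lemma card_le_rank {A I : Finset V} (hIA : I ⊆ A) (hI : M.Indep I) : I.card ≤ M.rank A :=
  le_csSup (M.bdd A) ⟨I, hIA, hI, rfl⟩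

lemma rank_le_card (A : Finset V) : M.rank A ≤ A.card := by
  obtain ⟨I, hIA, _, h⟩ := M.rank_spec A
  rw [← h]; exact Finset.card_le_card hIA

lemma rank_mono {A B : Finset V} (h : A ⊆ B) : M.rank A ≤ M.rank B := by
  obtain ⟨I, hIA, hI, hc⟩ := M.rank_spec A
  rw [← hc]; exact M.card_le_rank (hIA.trans h) hI

lemma rank_empty : M.rank ∅ = 0 :=
  Nat.le_antisymm (by simpa using M.rank_le_card ∅) (Nat.zero_le _)

lemma indep_of_rank_eq_card {A : Finset V} (h : M.rank A = A.card) : M.Indep A := by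
  obtain ⟨I, hIA, hI, hc⟩ := M.rank_spec A
  have : I = A := Finset.eq_of_subset_of_card_le hIA (by omega)
  rwa [← this]

/-- Extend an independent subset of `A` to one of full rank. -/
lemma exists_extend {A I : Finset V} (hIA : I ⊆ A) (hI : M.Indep I) :
    ∃ J, I ⊆ J ∧ J ⊆ A ∧ M.Indep J ∧ J.card = M.rank A := by
  obtain ⟨K, hKA, hK, hKc⟩ := M.rank_spec A
  by_cases h : M.rank A ≤ I.card
  · exact ⟨I, Finset.Subset.rfl, hIA, hI, (le_antisymm (M.card_le_rank hIA hI) h)⟩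
  push_neg at h
  -- induction on rank A - I.card
  have : ∀ n (I : Finset V), I ⊆ A → M.Indep I → M.rank A - I.card ≤ n →
      ∃ J, I ⊆ J ∧ J ⊆ A ∧ M.Indep J ∧ J.card = M.rank A := by
    intro n
    induction n with
    | zero =>
      intro I hIA hI hn
      have h1 := M.card_le_rank hIA hI
      exact ⟨I, Finset.Subset.rfl, hIA, hI, by omega⟩
    | succ n ih =>
      intro I hIA hI hn
      by_cases hc2 : M.rank A ≤ I.card
      · exact ⟨I, Finset.Subset.rfl, hIA, hI, (le_antisymm (M.card_le_rank hIA hI) hc2)⟩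
      push_neg at hc2
      obtain ⟨e, heK, heI, hei⟩ := M.augment hI hK (by omega)
      have hsub : insert e I ⊆ A := Finset.insert_subset (hKA heK) hIA
      have hcard : (insert e I).card = I.card + 1 := Finset.card_insert_of_notMem heI
      obtain ⟨J, hJ1, hJ2, hJ3, hJ4⟩ := ih (insert e I) hsub hei (by omega)
      exact ⟨J, (Finset.subset_insert _ _).trans hJ1, hJ2, hJ3, hJ4⟩
  exact this (M.rank A) I hIA hI (by omega)

lemma rank_submodular (A B : Finset V) :
    M.rank (A ∪ B) + M.rank (A ∩ B) ≤ M.rank A + M.rank B := by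
  obtain ⟨I, hIAB, hI, hIc⟩ := M.rank_spec (A ∩ B)
  obtain ⟨J, hIJ, hJAB, hJ, hJc⟩ := M.exists_extend (hIAB.trans Finset.inter_subset_union) hI
  have hJA : (J ∩ A).card ≤ M.rank A :=
    M.card_le_rank Finset.inter_subset_right (M.subset_indep Finset.inter_subset_left hJ)
  have hJB : (J ∩ B).card ≤ M.rank B :=
    M.card_le_rank Finset.inter_subset_right (M.subset_indep Finset.inter_subset_left hJ)
  have hJAB' : (J ∩ (A ∩ B)).card = M.rank (A ∩ B) := by
    have hle : (J ∩ (A ∩ B)).card ≤ M.rank (A ∩ B) :=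
      M.card_le_rank Finset.inter_subset_right (M.subset_indep Finset.inter_subset_left hJ)
    have hge : I ⊆ J ∩ (A ∩ B) := Finset.subset_inter hIJ hIAB
    have := Finset.card_le_card hge
    omega
  have key : (J ∩ A).card + (J ∩ B).card = (J ∩ (A ∪ B)).card + (J ∩ (A ∩ B)).card := by
    rw [← Finset.card_union_add_card_inter]
    congr 2 <;> ext v <;> simp <;> tauto
  have hJfull : (J ∩ (A ∪ B)).card = M.rank (A ∪ B) := by
    rw [Finset.inter_eq_left.mpr hJAB, hJc]
  omega

end FinMatroid


section DirectionLemma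

open Finset

variable {V : Type*} [Fintype V] [DecidableEq V]

/-- indicator vector in Euclidean space -/
noncomputable def indE (s : Finset V) : EuclideanSpace ℝ V := WithLp.toLp 2 (fun v => if v ∈ s then 1 else 0)

lemma indE_inj : Function.Injective (indE (V := V)) := by
  intro s t h
  ext v
  have := congrArg (fun w : EuclideanSpace ℝ V => w v) h
  simp only [indE, PiLp.toLp_apply] at this
  by_cases hs : v ∈ s <;> by_cases ht : v ∈ t <;> simp [hs, ht] at this ⊢

lemma inner_indE (s : Finset V) (d : EuclideanSpace ℝ V) :
    (inner ℝ (indE s) d : ℝ) = ∑ v ∈ s, d v := by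
  rw [PiLp.inner_apply]
  simp only [indE, PiLp.toLp_apply, RCLike.inner_apply, conj_trivial, ite_mul, one_mul, zero_mul, mul_ite, mul_one, mul_zero]
  rw [Finset.sum_ite_mem, Finset.univ_inter]

lemma sum_indE_of_disjoint (B : Finset (Finset V))
    (hdisj : ∀ b1 ∈ B, ∀ b2 ∈ B, b1 ≠ b2 → Disjoint b1 b2) :
    ∑ b ∈ B, indE b = indE (B.biUnion id) := by
  ext v
  rw [WithLp.ofLp_sum, Finset.sum_apply]
  by_cases hv : v ∈ B.biUnion id
  · simp only [Finset.mem_biUnion, id] at hv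
    obtain ⟨b0, hb0, hvb0⟩ := hv
    have : ∀ b ∈ B, b ≠ b0 → indE b v = 0 := by
      intro b hb hne
      have := hdisj b hb b0 hb0 hne
      have hvb : v ∉ b := fun hvb => (Finset.disjoint_left.mp this hvb) hvb0
      simp [indE, hvb]
    have hvT : v ∈ B.biUnion id := Finset.mem_biUnion.mpr ⟨b0, hb0, (show v ∈ id b0 from hvb0)⟩
    rw [Finset.sum_eq_single b0 this (fun h => absurd hb0 h)]
    simp [indE, hvb0, hvT]
    exact ⟨b0, hb0, hvb0⟩
  · have : ∀ b ∈ B, indE b v = 0 := by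
      intro b hb
      have hvb : v ∉ b := fun hvb => hv (Finset.mem_biUnion.mpr ⟨b, hb, hvb⟩)
      simp [indE, hvb]
    rw [Finset.sum_eq_zero this]
    simp [indE, hv]
    exact fun b hb hvb => hv (Finset.mem_biUnion.mpr ⟨b, hb, hvb⟩)

/-- The key combinatorial linear algebra lemma: given a nonempty set F of "fractional"
coordinates and two partial partitions of F into blocks each of size ≠ 1, there is a nonzero
direction supported on F with zero sum on every block. -/
lemma exists_direction {α β : Type*} [DecidableEq α] [DecidableEq β]
    (F : Finset V) (hF : F.Nonempty) (ρ : V → Option α) (κ : V → Option β)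
    (hρ : ∀ a : α, (F.filter (fun e => ρ e = some a)).card ≠ 1)
    (hκ : ∀ b : β, (F.filter (fun e => κ e = some b)).card ≠ 1) :
    ∃ d : V → ℝ, d ≠ 0 ∧ (∀ e ∉ F, d e = 0) ∧
      (∀ a : α, ∑ e ∈ F.filter (fun e => ρ e = some a), d e = 0) ∧
      (∀ b : β, ∑ e ∈ F.filter (fun e => κ e = some b), d e = 0) := by
  classical
  set E := EuclideanSpace ℝ V
  -- unit vectors for coordinates outside F
  set U : Finset E := (Finset.univ \ F).image (fun e => indE {e}) with hU
  -- blocks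
  set Fρ : Finset V := F.filter (fun e => (ρ e).isSome) with hFρ
  set Fκ : Finset V := F.filter (fun e => (κ e).isSome) with hFκ
  set Bρ : Finset (Finset V) := Fρ.image (fun e => F.filter (fun f => ρ f = ρ e)) with hBρ
  set Bκ : Finset (Finset V) := Fκ.image (fun e => F.filter (fun f => κ f = κ e)) with hBκ
  set W : Finset E := Bρ.image indE with hW
  set Vv : Finset E := Bκ.image indE with hVv
  -- block facts
  have hρblock : ∀ b ∈ Bρ, b.card ≥ 2 ∧ b ⊆ Fρ := by
    intro b hb
    simp only [hBρ, Finset.mem_image] at hb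
    obtain ⟨e, he, rfl⟩ := hb
    simp only [hFρ, Finset.mem_filter] at he
    obtain ⟨heF, hsome⟩ := he
    obtain ⟨a, ha⟩ := Option.isSome_iff_exists.mp hsome
    constructor
    · have hne : e ∈ F.filter (fun f => ρ f = ρ e) := by simp [heF]
      have h1 : (F.filter (fun f => ρ f = ρ e)).card ≠ 1 := by
        rw [ha]; exact hρ a
      have := Finset.card_pos.mpr ⟨e, hne⟩
      omega
    · intro f hf
      simp only [Finset.mem_filter] at hf
      simp [hFρ, hf.1, hf.2, ha]
  have hκblock : ∀ b ∈ Bκ, b.card ≥ 2 ∧ b ⊆ Fκ := by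
    intro b hb
    simp only [hBκ, Finset.mem_image] at hb
    obtain ⟨e, he, rfl⟩ := hb
    simp only [hFκ, Finset.mem_filter] at he
    obtain ⟨heF, hsome⟩ := he
    obtain ⟨a, ha⟩ := Option.isSome_iff_exists.mp hsome
    constructor
    · have hne : e ∈ F.filter (fun f => κ f = κ e) := by simp [heF]
      have h1 : (F.filter (fun f => κ f = κ e)).card ≠ 1 := by
        rw [ha]; exact hκ a
      have := Finset.card_pos.mpr ⟨e, hne⟩
      omega
    · intro f hf
      simp only [Finset.mem_filter] at hf
      simp [hFκ, hf.1, hf.2, ha]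
  have hρdisj : ∀ b1 ∈ Bρ, ∀ b2 ∈ Bρ, b1 ≠ b2 → Disjoint b1 b2 := by
    intro b1 hb1 b2 hb2 hne
    simp only [hBρ, Finset.mem_image] at hb1 hb2
    obtain ⟨e1, _, rfl⟩ := hb1
    obtain ⟨e2, _, rfl⟩ := hb2
    rw [Finset.disjoint_left]
    intro f hf1 hf2
    simp only [Finset.mem_filter] at hf1 hf2
    exact hne (by rw [← hf1.2, hf2.2])
  have hκdisj : ∀ b1 ∈ Bκ, ∀ b2 ∈ Bκ, b1 ≠ b2 → Disjoint b1 b2 := by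
    intro b1 hb1 b2 hb2 hne
    simp only [hBκ, Finset.mem_image] at hb1 hb2
    obtain ⟨e1, _, rfl⟩ := hb1
    obtain ⟨e2, _, rfl⟩ := hb2
    rw [Finset.disjoint_left]
    intro f hf1 hf2
    simp only [Finset.mem_filter] at hf1 hf2
    exact hne (by rw [← hf1.2, hf2.2])
  have hρunion : Bρ.biUnion id = Fρ := by
    ext f
    simp only [Finset.mem_biUnion, id]
    constructor
    · rintro ⟨b, hb, hfb⟩; exact (hρblock b hb).2 hfb
    · intro hf
      refine ⟨F.filter (fun g => ρ g = ρ f), ?_, ?_⟩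
      · exact Finset.mem_image.mpr ⟨f, hf, rfl⟩
      · simp [hFρ] at hf; simp [hf.1]
  have hκunion : Bκ.biUnion id = Fκ := by
    ext f
    simp only [Finset.mem_biUnion, id]
    constructor
    · rintro ⟨b, hb, hfb⟩; exact (hκblock b hb).2 hfb
    · intro hf
      refine ⟨F.filter (fun g => κ g = κ f), ?_, ?_⟩
      · exact Finset.mem_image.mpr ⟨f, hf, rfl⟩
      · simp [hFκ] at hf; simp [hf.1]
  have hρcard : 2 * Bρ.card ≤ Fρ.card := by
    rw [← hρunion, Finset.card_biUnion (t := id) hρdisj]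
    calc 2 * Bρ.card = ∑ _b ∈ Bρ, 2 := by rw [Finset.sum_const, smul_eq_mul, mul_comm]
    _ ≤ ∑ b ∈ Bρ, (id b).card := Finset.sum_le_sum (fun b hb => (hρblock b hb).1)
  have hκcard : 2 * Bκ.card ≤ Fκ.card := by
    rw [← hκunion, Finset.card_biUnion (t := id) hκdisj]
    calc 2 * Bκ.card = ∑ _b ∈ Bκ, 2 := by rw [Finset.sum_const, smul_eq_mul, mul_comm]
    _ ≤ ∑ b ∈ Bκ, (id b).card := Finset.sum_le_sum (fun b hb => (hκblock b hb).1)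
  have hFρF : Fρ ⊆ F := Finset.filter_subset _ _
  have hFκF : Fκ ⊆ F := Finset.filter_subset _ _
  have hUcard : U.card ≤ Fintype.card V - F.card := by
    calc U.card ≤ (Finset.univ \ F).card := Finset.card_image_le
    _ = Fintype.card V - F.card := by
        rw [Finset.card_sdiff_of_subset (Finset.subset_univ F), Finset.card_univ]
  -- the span bound
  have hspan : ∃ G : Finset E,
      (∀ e ∉ F, indE {e} ∈ (G : Set E)) ∧
      (∀ b ∈ Bρ, indE b ∈ Submodule.span ℝ (G : Set E)) ∧
      (∀ b ∈ Bκ, indE b ∈ Submodule.span ℝ (G : Set E)) ∧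
      G.card + 1 ≤ Fintype.card V := by
    by_cases hcase : Bρ.card + Bκ.card + 1 ≤ F.card
    · refine ⟨U ∪ W ∪ Vv, ?_, ?_, ?_, ?_⟩
      · intro e he
        simp only [Finset.coe_union, Set.mem_union]
        left; left
        simp only [hU, Finset.coe_image, Set.mem_image]
        exact ⟨e, by simp [he], rfl⟩
      · intro b hb
        apply Submodule.subset_span
        simp only [Finset.coe_union, Set.mem_union]
        left; right
        exact Finset.mem_coe.mpr (Finset.mem_image.mpr ⟨b, hb, rfl⟩)
      · intro b hb
        apply Submodule.subset_span
        simp only [Finset.coe_union, Set.mem_union]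
        right
        exact Finset.mem_coe.mpr (Finset.mem_image.mpr ⟨b, hb, rfl⟩)
      · have h1 : (U ∪ W ∪ Vv).card ≤ U.card + W.card + Vv.card := by
          calc (U ∪ W ∪ Vv).card ≤ (U ∪ W).card + Vv.card := Finset.card_union_le _ _
          _ ≤ U.card + W.card + Vv.card := by
              have := Finset.card_union_le U W; omega
        have h2 : W.card ≤ Bρ.card := Finset.card_image_le
        have h3 : Vv.card ≤ Bκ.card := Finset.card_image_le
        have h4 : F.card ≤ Fintype.card V := by
          rw [← Finset.card_univ]; exact Finset.card_le_card (Finset.subset_univ F)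
        omega
    · -- tight case: both block families partition F exactly, use the dependency
      push_neg at hcase
      have hFρcard : Fρ.card ≤ F.card := Finset.card_le_card hFρF
      have hFκcard : Fκ.card ≤ F.card := Finset.card_le_card hFκF
      have hρeq : Fρ = F := Finset.eq_of_subset_of_card_le hFρF (by omega)
      have hκeq : Fκ = F := Finset.eq_of_subset_of_card_le hFκF (by omega)
      have hBκne : Bκ.Nonempty := by
        obtain ⟨e, he⟩ := hF
        have : e ∈ Fκ := hκeq ▸ he
        exact ⟨_, Finset.mem_image.mpr ⟨e, this, rfl⟩⟩
      obtain ⟨b0, hb0⟩ := hBκne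
      have hdep : indE (V := V) b0 = ∑ b ∈ Bρ, indE b - ∑ b ∈ Bκ.erase b0, indE b := by
        rw [sum_indE_of_disjoint Bρ hρdisj, hρunion, hρeq]
        have : ∑ b ∈ Bκ, indE (V := V) b = indE F := by
          rw [sum_indE_of_disjoint Bκ hκdisj, hκunion, hκeq]
        rw [← this, ← Finset.add_sum_erase _ _ hb0]
        abel
      refine ⟨U ∪ W ∪ (Vv.erase (indE b0)), ?_, ?_, ?_, ?_⟩
      · intro e he
        simp only [Finset.coe_union, Set.mem_union]
        left; left
        simp only [hU, Finset.coe_image, Set.mem_image]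
        exact ⟨e, by simp [he], rfl⟩
      · intro b hb
        apply Submodule.subset_span
        simp only [Finset.coe_union, Set.mem_union]
        left; right
        exact Finset.mem_coe.mpr (Finset.mem_image.mpr ⟨b, hb, rfl⟩)
      · intro b hb
        by_cases hbb0 : b = b0
        · rw [hbb0]
          have hmem2 : (∑ b ∈ Bρ, indE b - ∑ b ∈ Bκ.erase b0, indE (V := V) b) ∈
              Submodule.span ℝ ((U ∪ W ∪ (Vv.erase (indE b0)) : Finset E) : Set E) := by
            apply sub_mem
            · apply Submodule.sum_mem
              intro c hc
              apply Submodule.subset_span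
              simp only [Finset.coe_union, Set.mem_union]
              left; right
              exact Finset.mem_coe.mpr (Finset.mem_image.mpr ⟨c, hc, rfl⟩)
            · apply Submodule.sum_mem
              intro c hc
              apply Submodule.subset_span
              simp only [Finset.coe_union, Set.mem_union]
              right
              refine Finset.mem_coe.mpr (Finset.mem_erase.mpr ⟨?_, ?_⟩)
              · intro hcontra
                exact (Finset.mem_erase.mp hc).1 (indE_inj hcontra)
              · exact Finset.mem_image.mpr ⟨c, Finset.mem_of_mem_erase hc, rfl⟩
          rwa [← hdep] at hmem2
        · apply Submodule.subset_span
          simp only [Finset.coe_union, Set.mem_union]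
          right
          refine Finset.mem_coe.mpr (Finset.mem_erase.mpr ⟨?_, ?_⟩)
          · intro hcontra
            exact hbb0 (indE_inj hcontra)
          · exact Finset.mem_image.mpr ⟨b, hb, rfl⟩
      · have h1 : (U ∪ W ∪ Vv.erase (indE b0)).card ≤ U.card + W.card + (Vv.erase (indE b0)).card := by
          calc (U ∪ W ∪ Vv.erase (indE b0)).card ≤ (U ∪ W).card + (Vv.erase (indE b0)).card :=
            Finset.card_union_le _ _
          _ ≤ _ := by have := Finset.card_union_le U W; omega
        have h2 : W.card ≤ Bρ.card := Finset.card_image_le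
        have hb0mem : indE b0 ∈ Vv := Finset.mem_image.mpr ⟨b0, hb0, rfl⟩
        have h3 : (Vv.erase (indE b0)).card = Vv.card - 1 := Finset.card_erase_of_mem hb0mem
        have h3' : Vv.card ≤ Bκ.card := Finset.card_image_le
        have h4 : F.card ≤ Fintype.card V := by
          rw [← Finset.card_univ]; exact Finset.card_le_card (Finset.subset_univ F)
        have h5 : 1 ≤ Vv.card := Finset.card_pos.mpr ⟨_, hb0mem⟩
        have hρF : 2 * Bρ.card ≤ F.card := by rw [← hρeq]; exact hρcard
        have hκF : 2 * Bκ.card ≤ F.card := by rw [← hκeq]; exact hκcard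
        omega
  obtain ⟨G, hGunit, hGρ, hGκ, hGcard⟩ := hspan
  -- span is proper, take orthogonal complement
  set K : Submodule ℝ E := Submodule.span ℝ (G : Set E) with hK
  have hKfr : Module.finrank ℝ K + 1 ≤ Fintype.card V := by
    have := finrank_span_finset_le_card (R := ℝ) G
    have h2 : (↑G : Set E).finrank ℝ = Module.finrank ℝ K := rfl
    omega
  have hKne : K ≠ ⊤ := by
    intro h
    rw [h] at hKfr
    rw [finrank_top] at hKfr
    have : Module.finrank ℝ E = Fintype.card V := finrank_euclideanSpace
    omega
  have hKo : Kᗮ ≠ ⊥ := by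
    intro h
    exact hKne (Submodule.orthogonal_eq_bot_iff.mp h)
  obtain ⟨d, hdK, hd0⟩ := Submodule.exists_mem_ne_zero_of_ne_bot hKo
  have hinner : ∀ g ∈ G, (inner ℝ g d : ℝ) = 0 := by
    intro g hg
    exact (Submodule.mem_orthogonal K d).mp hdK _ (Submodule.subset_span hg)
  have hinner' : ∀ v ∈ K, (inner ℝ v d : ℝ) = 0 := fun v hv =>
    (Submodule.mem_orthogonal K d).mp hdK v hv
  refine ⟨d, ?_, ?_, ?_, ?_⟩
  · intro h
    exact hd0 (by ext v; exact congrFun h v)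
  · intro e he
    have := hinner _ (hGunit e he)
    rw [inner_indE] at this
    simpa using this
  · intro a
    by_cases hb : (F.filter (fun e => ρ e = some a)).Nonempty
    · obtain ⟨e, he⟩ := hb
      simp only [Finset.mem_filter] at he
      have hmem : F.filter (fun e => ρ e = some a) ∈ Bρ := by
        apply Finset.mem_image.mpr
        refine ⟨e, ?_, ?_⟩
        · simp [hFρ, he.1, he.2]
        · rw [he.2]
      have := hinner' _ (hGρ _ hmem)
      rwa [inner_indE] at this
    · rw [Finset.not_nonempty_iff_eq_empty.mp hb, Finset.sum_empty]
  · intro b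
    by_cases hb : (F.filter (fun e => κ e = some b)).Nonempty
    · obtain ⟨e, he⟩ := hb
      simp only [Finset.mem_filter] at he
      have hmem : F.filter (fun e => κ e = some b) ∈ Bκ := by
        apply Finset.mem_image.mpr
        refine ⟨e, ?_, ?_⟩
        · simp [hFκ, he.1, he.2]
        · rw [he.2]
      have := hinner' _ (hGκ _ hmem)
      rwa [inner_indE] at this
    · rw [Finset.not_nonempty_iff_eq_empty.mp hb, Finset.sum_empty]

end DirectionLemma

section TightSets
open Finset
open scoped Classical

variable {V : Type*} [Fintype V] [DecidableEq V]

/-- tightness of the rank constraint at `A` for the vector `x` -/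
def TightSet (M : FinMatroid V) (x : V → ℝ) (A : Finset V) : Prop :=
  ∑ e ∈ A, x e = (M.rank A : ℝ)

def CoveredE (M : FinMatroid V) (x : V → ℝ) (e : V) : Prop :=
  ∃ A, TightSet M x A ∧ e ∈ A

/-- the minimal tight set containing `e` -/
noncomputable def tauSet (M : FinMatroid V) (x : V → ℝ) (e : V) : Finset V :=
  (Finset.univ.powerset.filter (fun A => TightSet M x A ∧ e ∈ A)).inf id

variable {M : FinMatroid V} {x : V → ℝ}

lemma tight_empty : TightSet M x ∅ := by
  simp [TightSet, FinMatroid.rank_empty M]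

lemma tight_union_inter (hrank : ∀ A : Finset V, ∑ e ∈ A, x e ≤ (M.rank A : ℝ))
    {A B : Finset V} (hA : TightSet M x A) (hB : TightSet M x B) :
    TightSet M x (A ∪ B) ∧ TightSet M x (A ∩ B) := by
  have hsum : ∑ e ∈ A ∪ B, x e + ∑ e ∈ A ∩ B, x e = ∑ e ∈ A, x e + ∑ e ∈ B, x e :=
    Finset.sum_union_inter
  have hsub : (M.rank (A ∪ B) : ℝ) + (M.rank (A ∩ B) : ℝ) ≤ (M.rank A : ℝ) + (M.rank B : ℝ) := by
    have := M.rank_submodular A B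
    push_cast
    exact_mod_cast this
  have h1 := hrank (A ∪ B)
  have h2 := hrank (A ∩ B)
  unfold TightSet at hA hB ⊢
  constructor <;> linarith

lemma tight_biUnion {ι : Type*} [DecidableEq ι]
    (hrank : ∀ A : Finset V, ∑ e ∈ A, x e ≤ (M.rank A : ℝ))
    (s : Finset ι) (g : ι → Finset V) (hg : ∀ i ∈ s, TightSet M x (g i)) :
    TightSet M x (s.biUnion g) := by
  induction s using Finset.induction_on with
  | empty => simpa using tight_empty
  | insert a s' hnot ih =>
    rw [Finset.biUnion_insert]
    exact (tight_union_inter hrank (hg a (Finset.mem_insert_self a s'))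
      (ih (fun i hi => hg i (Finset.mem_insert_of_mem hi)))).1

lemma tauSet_spec (hrank : ∀ A : Finset V, ∑ e ∈ A, x e ≤ (M.rank A : ℝ))
    {e : V} (he : CoveredE M x e) :
    TightSet M x (tauSet M x e) ∧ e ∈ tauSet M x e := by
  obtain ⟨A0, hA0, heA0⟩ := he
  have hmem : A0 ∈ Finset.univ.powerset.filter (fun A => TightSet M x A ∧ e ∈ A) := by
    simp [hA0, heA0]
  have key : ∀ (𝒜 : Finset (Finset V)), 𝒜.Nonempty →
      (∀ A ∈ 𝒜, TightSet M x A ∧ e ∈ A) → TightSet M x (𝒜.inf id) ∧ e ∈ 𝒜.inf id := by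
    intro 𝒜 h𝒜 hall
    induction h𝒜 using Finset.Nonempty.cons_induction with
    | singleton a => simpa using hall a (by simp)
    | cons a s ha hs ih =>
      rw [Finset.inf_cons]
      have h1 := hall a (Finset.mem_cons_self a s)
      have h2 := ih (fun A hA => hall A (Finset.mem_cons_of_mem hA))
      have h3 := tight_union_inter hrank h1.1 h2.1
      exact ⟨h3.2, Finset.mem_inter.mpr ⟨h1.2, h2.2⟩⟩
  exact key _ ⟨A0, hmem⟩ (fun A hA => (Finset.mem_filter.mp hA).2)

lemma tauSet_min {e : V} {A : Finset V} (hA : TightSet M x A) (he : e ∈ A) :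
    tauSet M x e ⊆ A := by
  have : A ∈ Finset.univ.powerset.filter (fun B => TightSet M x B ∧ e ∈ B) := by simp [hA, he]
  have h2 := Finset.inf_le (f := id) this
  exact h2

lemma covered_of_mem_tight {f : V} {A : Finset V} (hA : TightSet M x A) (hf : f ∈ A) :
    CoveredE M x f := ⟨A, hA, hf⟩


lemma sum01_int {g : V → ℝ} {s : Finset V} (h : ∀ f ∈ s, g f = 0 ∨ g f = 1) :
    ∃ n : ℤ, ∑ f ∈ s, g f = n := by
  induction s using Finset.induction_on with
  | empty => exact ⟨0, by simp⟩
  | insert a s' hnot ih =>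
    obtain ⟨n, hn⟩ := ih (fun f hf => h f (Finset.mem_insert_of_mem hf))
    rcases h a (Finset.mem_insert_self _ _) with h0 | h1
    · exact ⟨n, by rw [Finset.sum_insert hnot, h0, hn]; simp⟩
    · exact ⟨n + 1, by rw [Finset.sum_insert hnot, h1, hn]; push_cast; ring⟩

lemma no_int_frac {t : ℝ} (h0 : 0 < t) (h1 : t < 1) (n : ℤ) (hn : t = n) : False := by
  rw [hn] at h0 h1
  have hh0 : (0 : ℤ) < n := by exact_mod_cast h0
  have hh1 : n < 1 := by exact_mod_cast h1
  omega

/-- The core perturbation lemma: a point of the polytope with a fractional coordinate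
admits a nonzero perturbation `d` with `x + d` and `x - d` still in the polytope. -/
lemma exists_perturbation {C : ℕ} (color : V → Fin C) (ℓ u : Fin C → ℕ)
    (M : FinMatroid V) (x : V → ℝ)
    (hx01 : ∀ e, 0 ≤ x e ∧ x e ≤ 1)
    (hcol : ∀ c : Fin C,
      (ℓ c : ℝ) ≤ ∑ e ∈ Finset.univ.filter (fun e => color e = c), x e ∧
      ∑ e ∈ Finset.univ.filter (fun e => color e = c), x e ≤ (u c : ℝ))
    (hrank : ∀ A : Finset V, ∑ e ∈ A, x e ≤ (M.rank A : ℝ))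
    (hfrac : ∃ e, x e ≠ 0 ∧ x e ≠ 1) :
    ∃ d : V → ℝ, d ≠ 0 ∧
      (∀ e, 0 ≤ x e + d e ∧ x e + d e ≤ 1) ∧ (∀ e, 0 ≤ x e - d e ∧ x e - d e ≤ 1) ∧
      (∀ c : Fin C,
        ((ℓ c : ℝ) ≤ ∑ e ∈ Finset.univ.filter (fun e => color e = c), (x e + d e) ∧
          ∑ e ∈ Finset.univ.filter (fun e => color e = c), (x e + d e) ≤ (u c : ℝ)) ∧
        ((ℓ c : ℝ) ≤ ∑ e ∈ Finset.univ.filter (fun e => color e = c), (x e - d e) ∧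
          ∑ e ∈ Finset.univ.filter (fun e => color e = c), (x e - d e) ≤ (u c : ℝ))) ∧
      (∀ A : Finset V, (∑ e ∈ A, (x e + d e)) ≤ (M.rank A : ℝ) ∧
        (∑ e ∈ A, (x e - d e)) ≤ (M.rank A : ℝ)) := by
  classical
  -- the fractional support
  set F : Finset V := Finset.univ.filter (fun e => x e ≠ 0 ∧ x e ≠ 1) with hFdef
  have hFne : F.Nonempty := by
    obtain ⟨e, he⟩ := hfrac
    exact ⟨e, by simp [hFdef, he.1, he.2]⟩
  have hFmem : ∀ e, e ∈ F ↔ (x e ≠ 0 ∧ x e ≠ 1) := fun e => by simp [hFdef]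
  have hFfrac : ∀ e ∈ F, 0 < x e ∧ x e < 1 := by
    intro e he
    rw [hFmem] at he
    obtain ⟨h1, h2⟩ := hx01 e
    exact ⟨lt_of_le_of_ne h1 (Ne.symm he.1), lt_of_le_of_ne h2 he.2⟩
  have hnotF : ∀ e, e ∉ F → x e = 0 ∨ x e = 1 := by
    intro e he
    rw [hFmem] at he
    push_neg at he
    by_cases h : x e = 0
    · exact Or.inl h
    · exact Or.inr (he h)
  -- abbreviations
  have h_tau_tight : ∀ e, CoveredE M x e → TightSet M x (tauSet M x e) :=
    fun e he => (tauSet_spec hrank he).1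
  have h_tau_mem : ∀ e, CoveredE M x e → e ∈ tauSet M x e :=
    fun e he => (tauSet_spec hrank he).2
  have h_cov_tau : ∀ e f, CoveredE M x e → f ∈ tauSet M x e → CoveredE M x f :=
    fun e f he hf => covered_of_mem_tight (h_tau_tight e he) hf
  have h_tau_sub : ∀ e f, CoveredE M x e → f ∈ tauSet M x e → tauSet M x f ⊆ tauSet M x e :=
    fun e f he hf => tauSet_min (h_tau_tight e he) hf
  -- the "residual" tight set below τ e
  have hZ : ∀ e, CoveredE M x e →
      TightSet M x ((tauSet M x e).filter (fun f => tauSet M x f ≠ tauSet M x e)) := by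
    intro e he
    have heq : ((tauSet M x e).filter (fun f => tauSet M x f ≠ tauSet M x e)).biUnion
        (tauSet M x) = (tauSet M x e).filter (fun f => tauSet M x f ≠ tauSet M x e) := by
      ext g
      simp only [Finset.mem_biUnion, Finset.mem_filter]
      constructor
      · rintro ⟨f, hf, hgf⟩
        have hfc : CoveredE M x f := h_cov_tau e f he hf.1
        have hsub : tauSet M x f ⊆ tauSet M x e := h_tau_sub e f he hf.1
        have hg1 : g ∈ tauSet M x e := hsub hgf
        refine ⟨hg1, ?_⟩
        intro hcontra
        have hgsub : tauSet M x g ⊆ tauSet M x f := h_tau_sub f g hfc hgf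
        rw [hcontra] at hgsub
        exact hf.2 (Finset.Subset.antisymm hsub hgsub)
      · intro ⟨hg1, hg2⟩
        exact ⟨g, ⟨hg1, hg2⟩, h_tau_mem g (h_cov_tau e g he hg1)⟩
    rw [← heq]
    apply tight_biUnion hrank
    intro f hf
    exact h_tau_tight f (h_cov_tau e f he (Finset.mem_filter.mp hf).1)
  -- integrality of the class sums
  have h_cls_int : ∀ e, CoveredE M x e →
      ∃ n : ℤ, ∑ f ∈ (tauSet M x e).filter (fun f => tauSet M x f = tauSet M x e), x f = n := by
    intro e he
    have hsplit := Finset.sum_filter_add_sum_filter_not (tauSet M x e)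
      (fun f => tauSet M x f = tauSet M x e) x
    have h1 : ∑ f ∈ tauSet M x e, x f = (M.rank (tauSet M x e) : ℝ) := h_tau_tight e he
    have h2 : ∑ f ∈ (tauSet M x e).filter (fun f => ¬ tauSet M x f = tauSet M x e), x f =
        (M.rank ((tauSet M x e).filter (fun f => tauSet M x f ≠ tauSet M x e)) : ℝ) := hZ e he
    refine ⟨(M.rank (tauSet M x e) : ℤ) - (M.rank ((tauSet M x e).filter
      (fun f => tauSet M x f ≠ tauSet M x e)) : ℤ), ?_⟩
    push_cast
    rw [← h1]
    rw [← hsplit, h2]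
    ring
  -- the block maps
  set ρ : V → Option (Finset V) :=
    fun e => if CoveredE M x e then some (tauSet M x e) else none with hρdef
  set TC : Fin C → Prop := fun c =>
    ∑ f ∈ Finset.univ.filter (fun f => color f = c), x f = (ℓ c : ℝ) ∨
    ∑ f ∈ Finset.univ.filter (fun f => color f = c), x f = (u c : ℝ) with hTCdef
  set κ : V → Option (Fin C) :=
    fun e => if TC (color e) then some (color e) else none with hκdef
  have hρ_some : ∀ e t, ρ e = some t ↔ CoveredE M x e ∧ tauSet M x e = t := by
    intro e t
    rw [hρdef]
    by_cases h : CoveredE M x e <;> simp [h]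
  have hκ_some : ∀ e c, κ e = some c ↔ TC (color e) ∧ color e = c := by
    intro e c
    rw [hκdef]
    by_cases h : TC (color e) <;> simp [h]
  -- block equalities
  have hblockρ : ∀ e, CoveredE M x e →
      F.filter (fun f => ρ f = some (tauSet M x e)) =
      F.filter (fun f => f ∈ (tauSet M x e).filter (fun g => tauSet M x g = tauSet M x e)) := by
    intro e he
    apply Finset.filter_congr
    intro f hf
    rw [hρ_some]
    simp only [Finset.mem_filter, eq_iff_iff]
    constructor
    · rintro ⟨hfc, hft⟩
      refine ⟨?_, hft⟩
      have := h_tau_mem f hfc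
      rwa [hft] at this
    · rintro ⟨hfτ, hft⟩
      exact ⟨h_cov_tau e f he hfτ, hft⟩
  have hblockκ : ∀ c, TC c →
      F.filter (fun f => κ f = some c) = F.filter (fun f => color f = c) := by
    intro c hc
    apply Finset.filter_congr
    intro f hf
    rw [hκ_some]
    constructor
    · rintro ⟨_, h⟩; exact h
    · intro h; exact ⟨by rwa [h], h⟩
  -- the block cardinality conditions
  have hρcard : ∀ t : Finset V, (F.filter (fun e => ρ e = some t)).card ≠ 1 := by
    intro t hcard
    obtain ⟨e, he⟩ := Finset.card_eq_one.mp hcard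
    have hemem : e ∈ F.filter (fun f => ρ f = some t) := by rw [he]; exact Finset.mem_singleton_self e
    rw [Finset.mem_filter] at hemem
    obtain ⟨heF, heρ⟩ := hemem
    obtain ⟨hecov, heτ⟩ := (hρ_some e t).mp heρ
    subst heτ
    rw [hblockρ e hecov] at he
    -- now : F.filter (· ∈ cls) = {e}
    set cls := (tauSet M x e).filter (fun g => tauSet M x g = tauSet M x e) with hclsdef
    obtain ⟨n, hn⟩ := h_cls_int e hecov
    have hsplit := Finset.sum_filter_add_sum_filter_not cls (fun f => f ∈ F) x
    have hswap : cls.filter (fun f => f ∈ F) = F.filter (fun f => f ∈ cls) := by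
      ext f; simp only [Finset.mem_filter]; tauto
    have hone : ∑ f ∈ cls.filter (fun f => f ∈ F), x f = x e := by
      rw [hswap, he, Finset.sum_singleton]
    obtain ⟨m, hm⟩ : ∃ m : ℤ, ∑ f ∈ cls.filter (fun f => f ∉ F), x f = m := by
      apply sum01_int
      intro f hf
      exact hnotF f (Finset.mem_filter.mp hf).2
    have hxe : x e = ((n - m : ℤ) : ℝ) := by
      push_cast
      rw [← hone] at *
      linarith [hsplit, hn, hm]
    obtain ⟨hf1, hf2⟩ := hFfrac e heF
    exact no_int_frac hf1 hf2 _ hxe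
  have hκcard : ∀ c : Fin C, (F.filter (fun e => κ e = some c)).card ≠ 1 := by
    intro c hcard
    obtain ⟨e, he⟩ := Finset.card_eq_one.mp hcard
    have hemem : e ∈ F.filter (fun f => κ f = some c) := by rw [he]; exact Finset.mem_singleton_self e
    rw [Finset.mem_filter] at hemem
    obtain ⟨heF, heκ⟩ := hemem
    obtain ⟨hetc, hecol⟩ := (hκ_some e c).mp heκ
    rw [hecol] at hetc
    rw [hblockκ c hetc] at he
    set Vc := Finset.univ.filter (fun f => color f = c) with hVcdef
    obtain ⟨n, hn⟩ : ∃ n : ℤ, ∑ f ∈ Vc, x f = n := by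
      rcases hetc with h | h
      · exact ⟨ℓ c, by rw [h]; push_cast; rfl⟩
      · exact ⟨u c, by rw [h]; push_cast; rfl⟩
    have hsplit := Finset.sum_filter_add_sum_filter_not Vc (fun f => f ∈ F) x
    have hswap : Vc.filter (fun f => f ∈ F) = F.filter (fun f => color f = c) := by
      ext f; simp only [hVcdef, Finset.mem_filter, Finset.mem_univ, true_and]; tauto
    have hone : ∑ f ∈ Vc.filter (fun f => f ∈ F), x f = x e := by
      rw [hswap, he, Finset.sum_singleton]
    obtain ⟨m, hm⟩ : ∃ m : ℤ, ∑ f ∈ Vc.filter (fun f => f ∉ F), x f = m := by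
      apply sum01_int
      intro f hf
      exact hnotF f (Finset.mem_filter.mp hf).2
    have hxe : x e = ((n - m : ℤ) : ℝ) := by
      push_cast
      rw [← hone] at *
      linarith [hsplit, hn, hm]
    obtain ⟨hf1, hf2⟩ := hFfrac e heF
    exact no_int_frac hf1 hf2 _ hxe
  -- obtain the direction
  obtain ⟨d0, hd0ne, hd0supp, hd0ρ, hd0κ⟩ := exists_direction F hFne ρ κ hρcard hκcard
  -- d0 sums to zero on tight sets
  have P1 : ∀ A : Finset V, TightSet M x A → ∑ f ∈ A, d0 f = 0 := by
    intro A hA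
    rw [← Finset.sum_fiberwise_of_maps_to
      (fun f (hf : f ∈ A) => Finset.mem_image_of_mem (tauSet M x) hf) d0]
    apply Finset.sum_eq_zero
    intro t ht
    obtain ⟨e, heA, heτ⟩ := Finset.mem_image.mp ht
    subst heτ
    have hecov : CoveredE M x e := covered_of_mem_tight hA heA
    have hsplit := Finset.sum_filter_add_sum_filter_not
      (A.filter (fun f => tauSet M x f = tauSet M x e)) (fun f => f ∈ F) d0
    have hzero : ∑ f ∈ (A.filter (fun f => tauSet M x f = tauSet M x e)).filter
        (fun f => f ∉ F), d0 f = 0 := by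
      apply Finset.sum_eq_zero
      intro f hf
      exact hd0supp f (Finset.mem_filter.mp hf).2
    have hseteq : (A.filter (fun f => tauSet M x f = tauSet M x e)).filter (fun f => f ∈ F) =
        F.filter (fun f => ρ f = some (tauSet M x e)) := by
      ext f
      simp only [Finset.mem_filter]
      rw [hρ_some]
      constructor
      · rintro ⟨⟨hfA, hfτ⟩, hfF⟩
        exact ⟨hfF, covered_of_mem_tight hA hfA, hfτ⟩
      · rintro ⟨hfF, hfc, hfτ⟩
        refine ⟨⟨?_, hfτ⟩, hfF⟩
        have h1 : f ∈ tauSet M x f := h_tau_mem f hfc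
        rw [hfτ] at h1
        exact tauSet_min hA heA h1
    rw [← hsplit, hzero, add_zero, hseteq]
    exact hd0ρ (tauSet M x e)
  -- d0 sums to zero on tight color classes
  have P2 : ∀ c : Fin C, TC c → ∑ f ∈ Finset.univ.filter (fun f => color f = c), d0 f = 0 := by
    intro c hc
    have hsplit := Finset.sum_filter_add_sum_filter_not
      (Finset.univ.filter (fun f => color f = c)) (fun f => f ∈ F) d0
    have hzero : ∑ f ∈ (Finset.univ.filter (fun f => color f = c)).filter (fun f => f ∉ F), d0 f
        = 0 := by
      apply Finset.sum_eq_zero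
      intro f hf
      exact hd0supp f (Finset.mem_filter.mp hf).2
    have hseteq : (Finset.univ.filter (fun f => color f = c)).filter (fun f => f ∈ F) =
        F.filter (fun f => κ f = some c) := by
      ext f
      simp only [Finset.mem_filter, Finset.mem_univ, true_and]
      rw [hκ_some]
      constructor
      · rintro ⟨hfc, hfF⟩
        exact ⟨hfF, by rwa [hfc], hfc⟩
      · rintro ⟨hfF, _, hfc⟩
        exact ⟨hfc, hfF⟩
    rw [← hsplit, hzero, add_zero, hseteq]
    exact hd0κ c
  -- choose ε
  set SA : Finset ℝ := Finset.univ.powerset.image (fun A : Finset V =>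
    if TightSet M x A then 1
    else ((M.rank A : ℝ) - ∑ f ∈ A, x f) / (|∑ f ∈ A, d0 f| + 1)) with hSAdef
  set SC : Finset ℝ := Finset.univ.image (fun c : Fin C =>
    if TC c then 1
    else min ((∑ f ∈ Finset.univ.filter (fun f => color f = c), x f - (ℓ c : ℝ)) /
        (|∑ f ∈ Finset.univ.filter (fun f => color f = c), d0 f| + 1))
      (((u c : ℝ) - ∑ f ∈ Finset.univ.filter (fun f => color f = c), x f) /
        (|∑ f ∈ Finset.univ.filter (fun f => color f = c), d0 f| + 1))) with hSCdef
  set SE : Finset ℝ := F.image (fun e => min (x e) (1 - x e) / (|d0 e| + 1)) with hSEdef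
  set T : Finset ℝ := insert 1 (SA ∪ SC ∪ SE) with hTdef
  have hTne : T.Nonempty := ⟨1, Finset.mem_insert_self 1 _⟩
  set ε : ℝ := T.min' hTne with hεdef
  have hεpos : 0 < ε := by
    rw [hεdef]
    rw [Finset.lt_min'_iff]
    intro y hy
    rw [hTdef] at hy
    rcases Finset.mem_insert.mp hy with h1 | hy'
    · rw [h1]; norm_num
    rcases Finset.mem_union.mp hy' with hy2 | hy3
    · rcases Finset.mem_union.mp hy2 with hyA | hyC
      · obtain ⟨A, _, rfl⟩ := Finset.mem_image.mp hyA
        by_cases hT : TightSet M x A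
        · simp [hT]
        · simp only [hT, if_false]
          apply div_pos
          · have h1 := hrank A
            have h2 : ∑ f ∈ A, x f ≠ (M.rank A : ℝ) := hT
            cases lt_or_eq_of_le h1 with
            | inl h => linarith
            | inr h => exact absurd h h2
          · positivity
      · obtain ⟨c, _, rfl⟩ := Finset.mem_image.mp hyC
        by_cases hT : TC c
        · simp [hT]
        · simp only [hT, if_false]
          have hT1 : ∑ f ∈ Finset.univ.filter (fun f => color f = c), x f ≠ (ℓ c : ℝ) :=
            fun h => hT (Or.inl h)
          have hT2 : ∑ f ∈ Finset.univ.filter (fun f => color f = c), x f ≠ (u c : ℝ) :=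
            fun h => hT (Or.inr h)
          obtain ⟨h1, h2⟩ := hcol c
          apply lt_min
          · apply div_pos
            · cases lt_or_eq_of_le h1 with
              | inl h => linarith
              | inr h => exact absurd h.symm hT1
            · positivity
          · apply div_pos
            · cases lt_or_eq_of_le h2 with
              | inl h => linarith
              | inr h => exact absurd h hT2
            · positivity
    · obtain ⟨e, heF, rfl⟩ := Finset.mem_image.mp hy3
      obtain ⟨h1, h2⟩ := hFfrac e heF
      apply div_pos
      · exact lt_min h1 (by linarith)
      · positivity
  -- the bounds from ε
  have hεA : ∀ A : Finset V, ¬ TightSet M x A →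
      ε * |∑ f ∈ A, d0 f| ≤ (M.rank A : ℝ) - ∑ f ∈ A, x f := by
    intro A hA
    have hmem : ((M.rank A : ℝ) - ∑ f ∈ A, x f) / (|∑ f ∈ A, d0 f| + 1) ∈ T := by
      rw [hTdef]
      apply Finset.mem_insert_of_mem
      apply Finset.mem_union_left
      apply Finset.mem_union_left
      rw [hSAdef]
      apply Finset.mem_image.mpr
      exact ⟨A, Finset.mem_powerset.mpr (Finset.subset_univ A), by simp [hA]⟩
    have hle : ε ≤ ((M.rank A : ℝ) - ∑ f ∈ A, x f) / (|∑ f ∈ A, d0 f| + 1) :=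
      Finset.min'_le T _ hmem
    have hpos : (0:ℝ) < |∑ f ∈ A, d0 f| + 1 := by positivity
    have := (le_div_iff₀ hpos).mp hle
    have habs : ε * |∑ f ∈ A, d0 f| ≤ ε * (|∑ f ∈ A, d0 f| + 1) := by nlinarith [abs_nonneg (∑ f ∈ A, d0 f)]
    linarith
  have hεC : ∀ c : Fin C, ¬ TC c →
      ε * |∑ f ∈ Finset.univ.filter (fun f => color f = c), d0 f| ≤
        (∑ f ∈ Finset.univ.filter (fun f => color f = c), x f - (ℓ c : ℝ)) ∧
      ε * |∑ f ∈ Finset.univ.filter (fun f => color f = c), d0 f| ≤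
        ((u c : ℝ) - ∑ f ∈ Finset.univ.filter (fun f => color f = c), x f) := by
    intro c hc
    have hmem : min ((∑ f ∈ Finset.univ.filter (fun f => color f = c), x f - (ℓ c : ℝ)) /
        (|∑ f ∈ Finset.univ.filter (fun f => color f = c), d0 f| + 1))
      (((u c : ℝ) - ∑ f ∈ Finset.univ.filter (fun f => color f = c), x f) /
        (|∑ f ∈ Finset.univ.filter (fun f => color f = c), d0 f| + 1)) ∈ T := by
      rw [hTdef]
      apply Finset.mem_insert_of_mem
      apply Finset.mem_union_left
      apply Finset.mem_union_right
      rw [hSCdef]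
      apply Finset.mem_image.mpr
      exact ⟨c, Finset.mem_univ c, by simp [hc]⟩
    have hle := Finset.min'_le T _ hmem
    rw [← hεdef] at hle
    have hle1 := le_trans hle (min_le_left _ _)
    have hle2 := le_trans hle (min_le_right _ _)
    have hpos : (0:ℝ) < |∑ f ∈ Finset.univ.filter (fun f => color f = c), d0 f| + 1 := by positivity
    have h1 := (le_div_iff₀ hpos).mp hle1
    have h2 := (le_div_iff₀ hpos).mp hle2
    have habs : ε * |∑ f ∈ Finset.univ.filter (fun f => color f = c), d0 f| ≤
        ε * (|∑ f ∈ Finset.univ.filter (fun f => color f = c), d0 f| + 1) := by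
      nlinarith [abs_nonneg (∑ f ∈ Finset.univ.filter (fun f => color f = c), d0 f)]
    constructor <;> linarith
  have hεE : ∀ e ∈ F, ε * |d0 e| ≤ x e ∧ ε * |d0 e| ≤ 1 - x e := by
    intro e heF
    have hmem : min (x e) (1 - x e) / (|d0 e| + 1) ∈ T := by
      rw [hTdef]
      apply Finset.mem_insert_of_mem
      apply Finset.mem_union_right
      rw [hSEdef]
      exact Finset.mem_image.mpr ⟨e, heF, rfl⟩
    have hle := Finset.min'_le T _ hmem
    rw [← hεdef] at hle
    have hpos : (0:ℝ) < |d0 e| + 1 := by positivity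
    have h1 := (le_div_iff₀ hpos).mp hle
    have habs : ε * |d0 e| ≤ ε * (|d0 e| + 1) := by nlinarith [abs_nonneg (d0 e)]
    have hm1 : min (x e) (1 - x e) ≤ x e := min_le_left _ _
    have hm2 : min (x e) (1 - x e) ≤ 1 - x e := min_le_right _ _
    constructor <;> linarith
  -- define d and verify
  refine ⟨fun e => ε * d0 e, ?_, ?_, ?_, ?_, ?_⟩
  · intro hcontra
    apply hd0ne
    ext e
    have := congrFun hcontra e
    simp only [Pi.zero_apply] at this ⊢
    rcases mul_eq_zero.mp this with h | h
    · exact absurd h (ne_of_gt hεpos)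
    · exact h
  · intro e
    dsimp only
    by_cases heF : e ∈ F
    · obtain ⟨h1, h2⟩ := hεE e heF
      have ha1 : -(ε * |d0 e|) ≤ ε * d0 e := by
        have := neg_abs_le (d0 e)
        nlinarith [hεpos.le]
      have ha2 : ε * d0 e ≤ ε * |d0 e| := by
        have := le_abs_self (d0 e)
        nlinarith [hεpos.le]
      obtain ⟨hx1, hx2⟩ := hx01 e
      constructor <;> linarith
    · rw [hd0supp e heF]
      obtain ⟨hx1, hx2⟩ := hx01 e
      constructor <;> linarith
  · intro e
    dsimp only
    by_cases heF : e ∈ F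
    · obtain ⟨h1, h2⟩ := hεE e heF
      have ha1 : -(ε * |d0 e|) ≤ ε * d0 e := by
        have := neg_abs_le (d0 e)
        nlinarith [hεpos.le]
      have ha2 : ε * d0 e ≤ ε * |d0 e| := by
        have := le_abs_self (d0 e)
        nlinarith [hεpos.le]
      obtain ⟨hx1, hx2⟩ := hx01 e
      constructor <;> linarith
    · rw [hd0supp e heF]
      obtain ⟨hx1, hx2⟩ := hx01 e
      constructor <;> linarith
  · intro c
    dsimp only
    have hsum1 : ∑ e ∈ Finset.univ.filter (fun e => color e = c), (x e + ε * d0 e) =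
        ∑ e ∈ Finset.univ.filter (fun e => color e = c), x e +
        ε * ∑ e ∈ Finset.univ.filter (fun e => color e = c), d0 e := by
      rw [Finset.sum_add_distrib, Finset.mul_sum]
    have hsum2 : ∑ e ∈ Finset.univ.filter (fun e => color e = c), (x e - ε * d0 e) =
        ∑ e ∈ Finset.univ.filter (fun e => color e = c), x e -
        ε * ∑ e ∈ Finset.univ.filter (fun e => color e = c), d0 e := by
      rw [Finset.sum_sub_distrib, Finset.mul_sum]
    obtain ⟨hc1, hc2⟩ := hcol c
    by_cases hTc : TC c
    · rw [hsum1, hsum2, P2 c hTc]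
      simp only [mul_zero, add_zero, sub_zero]
      exact ⟨⟨hc1, hc2⟩, ⟨hc1, hc2⟩⟩
    · obtain ⟨hb1, hb2⟩ := hεC c hTc
      have ha1 := neg_abs_le (∑ f ∈ Finset.univ.filter (fun f => color f = c), d0 f)
      have ha2 := le_abs_self (∑ f ∈ Finset.univ.filter (fun f => color f = c), d0 f)
      have hm1 : -(ε * |∑ f ∈ Finset.univ.filter (fun f => color f = c), d0 f|) ≤
          ε * ∑ f ∈ Finset.univ.filter (fun f => color f = c), d0 f := by
        nlinarith [hεpos.le]
      have hm2 : ε * ∑ f ∈ Finset.univ.filter (fun f => color f = c), d0 f ≤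
          ε * |∑ f ∈ Finset.univ.filter (fun f => color f = c), d0 f| := by
        nlinarith [hεpos.le]
      rw [hsum1, hsum2]
      refine ⟨⟨by linarith, by linarith⟩, by linarith, by linarith⟩
  · intro A
    dsimp only
    have hsum1 : ∑ e ∈ A, (x e + ε * d0 e) = ∑ e ∈ A, x e + ε * ∑ e ∈ A, d0 e := by
      rw [Finset.sum_add_distrib, Finset.mul_sum]
    have hsum2 : ∑ e ∈ A, (x e - ε * d0 e) = ∑ e ∈ A, x e - ε * ∑ e ∈ A, d0 e := by
      rw [Finset.sum_sub_distrib, Finset.mul_sum]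
    by_cases hTA : TightSet M x A
    · rw [hsum1, hsum2, P1 A hTA]
      simp only [mul_zero, add_zero, sub_zero]
      exact ⟨le_of_eq hTA, le_of_eq hTA⟩
    · have hb := hεA A hTA
      have ha1 := neg_abs_le (∑ f ∈ A, d0 f)
      have ha2 := le_abs_self (∑ f ∈ A, d0 f)
      have hm1 : -(ε * |∑ f ∈ A, d0 f|) ≤ ε * ∑ f ∈ A, d0 f := by nlinarith [hεpos.le]
      have hm2 : ε * ∑ f ∈ A, d0 f ≤ ε * |∑ f ∈ A, d0 f| := by nlinarith [hεpos.le]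
      rw [hsum1, hsum2]
      exact ⟨by linarith, by linarith⟩

end TightSets


lemma sum_ind {V : Type*} [DecidableEq V] (S A : Finset V) :
    ∑ e ∈ A, (if e ∈ S then (1:ℝ) else 0) = ((A ∩ S).card : ℝ) := by
  rw [Finset.sum_ite_mem]
  simp

/-- The convex hull of the indicator vectors of the feasible sets (independent sets
satisfying the fairness bounds) equals `P_F ∩ P`, the intersection of the fairness polytope
with the matroid polytope. -/
theorem convexHull_feasible_eq_inter_polytopes {V : Type*} [Fintype V] [DecidableEq V]
    {C : ℕ} (color : V → Fin C) (ℓ u : Fin C → ℕ) (hlu : ∀ c, ℓ c ≤ u c)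
    (M : FinMatroid V) :
    convexHull ℝ {x : V → ℝ | ∃ S : Finset V, M.Indep S ∧
        (∀ c : Fin C,
          ℓ c ≤ (S.filter (fun v => color v = c)).card ∧
          (S.filter (fun v => color v = c)).card ≤ u c) ∧
        x = fun e => if e ∈ S then (1 : ℝ) else 0} =
      {x : V → ℝ | (∀ e, 0 ≤ x e ∧ x e ≤ 1) ∧
          ∀ c : Fin C,
            (ℓ c : ℝ) ≤ ∑ e ∈ Finset.univ.filter (fun e => color e = c), x e ∧
            ∑ e ∈ Finset.univ.filter (fun e => color e = c), x e ≤ (u c : ℝ)} ∩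
        {x : V → ℝ | (∀ e, 0 ≤ x e) ∧
          ∀ A : Finset V, ∑ e ∈ A, x e ≤ (M.rank A : ℝ)} := by
  classical
  set Feas : Set (V → ℝ) := {x : V → ℝ | ∃ S : Finset V, M.Indep S ∧
      (∀ c : Fin C,
        ℓ c ≤ (S.filter (fun v => color v = c)).card ∧
        (S.filter (fun v => color v = c)).card ≤ u c) ∧
      x = fun e => if e ∈ S then (1 : ℝ) else 0} with hFeasdef
  set RHS : Set (V → ℝ) := {x : V → ℝ | (∀ e, 0 ≤ x e ∧ x e ≤ 1) ∧
        ∀ c : Fin C,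
          (ℓ c : ℝ) ≤ ∑ e ∈ Finset.univ.filter (fun e => color e = c), x e ∧
          ∑ e ∈ Finset.univ.filter (fun e => color e = c), x e ≤ (u c : ℝ)} ∩
      {x : V → ℝ | (∀ e, 0 ≤ x e) ∧
        ∀ A : Finset V, ∑ e ∈ A, x e ≤ (M.rank A : ℝ)} with hRHSdef
  -- membership characterization of RHS
  have hRHSmem : ∀ x : V → ℝ, x ∈ RHS ↔
      ((∀ e, 0 ≤ x e ∧ x e ≤ 1) ∧
        (∀ c : Fin C,
          (ℓ c : ℝ) ≤ ∑ e ∈ Finset.univ.filter (fun e => color e = c), x e ∧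
          ∑ e ∈ Finset.univ.filter (fun e => color e = c), x e ≤ (u c : ℝ)) ∧
        (∀ A : Finset V, ∑ e ∈ A, x e ≤ (M.rank A : ℝ))) := by
    intro x
    rw [hRHSdef]
    constructor
    · rintro ⟨⟨h1, h2⟩, ⟨h3, h4⟩⟩
      exact ⟨h1, h2, h4⟩
    · rintro ⟨h1, h2, h3⟩
      exact ⟨⟨h1, h2⟩, ⟨fun e => (h1 e).1, h3⟩⟩
  -- Feasible indicators lie in RHS
  have hFeasSub : Feas ⊆ RHS := by
    rintro x ⟨S, hSind, hScol, rfl⟩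
    rw [hRHSmem]
    refine ⟨?_, ?_, ?_⟩
    · intro e
      by_cases h : e ∈ S <;> simp [h]
    · intro c
      rw [sum_ind]
      have hseteq : Finset.univ.filter (fun e => color e = c) ∩ S =
          S.filter (fun v => color v = c) := by
        ext f; simp only [Finset.mem_inter, Finset.mem_filter, Finset.mem_univ, true_and]; tauto
      rw [hseteq]
      obtain ⟨hc1, hc2⟩ := hScol c
      exact ⟨by exact_mod_cast hc1, by exact_mod_cast hc2⟩
    · intro A
      rw [sum_ind]
      have hind : M.Indep (A ∩ S) := M.subset_indep Finset.inter_subset_right hSind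
      have := M.card_le_rank Finset.inter_subset_left hind
      exact_mod_cast this
  -- RHS is convex
  have hconv : Convex ℝ RHS := by
    intro p hp q hq a b ha hb hab
    rw [hRHSmem] at hp hq ⊢
    obtain ⟨hp1, hp2, hp3⟩ := hp
    obtain ⟨hq1, hq2, hq3⟩ := hq
    have happ : ∀ e, (a • p + b • q) e = a * p e + b * q e := by
      intro e; simp [Pi.add_apply, Pi.smul_apply, smul_eq_mul]
    have hsum : ∀ s : Finset V, ∑ e ∈ s, (a • p + b • q) e =
        a * ∑ e ∈ s, p e + b * ∑ e ∈ s, q e := by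
      intro s
      rw [Finset.mul_sum, Finset.mul_sum, ← Finset.sum_add_distrib]
      exact Finset.sum_congr rfl (fun e _ => happ e)
    refine ⟨?_, ?_, ?_⟩
    · intro e
      rw [happ]
      obtain ⟨h1, h2⟩ := hp1 e
      obtain ⟨h3, h4⟩ := hq1 e
      constructor
      · positivity
      · nlinarith
    · intro c
      rw [hsum]
      obtain ⟨h1, h2⟩ := hp2 c
      obtain ⟨h3, h4⟩ := hq2 c
      constructor <;> nlinarith
    · intro A
      rw [hsum]
      have h1 := hp3 A
      have h2 := hq3 A
      nlinarith
  -- RHS is compact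
  have hsumcont : ∀ s : Finset V, Continuous (fun x : V → ℝ => ∑ e ∈ s, x e) :=
    fun s => continuous_finset_sum s (fun e _ => continuous_apply e)
  have hclosed : IsClosed RHS := by
    rw [hRHSdef]
    apply IsClosed.inter
    · rw [Set.setOf_and]
      apply IsClosed.inter
      · rw [Set.setOf_forall]
        apply isClosed_iInter
        intro e
        rw [Set.setOf_and]
        exact (isClosed_le continuous_const (continuous_apply e)).inter
          (isClosed_le (continuous_apply e) continuous_const)
      · rw [Set.setOf_forall]
        apply isClosed_iInter
        intro c
        rw [Set.setOf_and]
        exact (isClosed_le continuous_const (hsumcont _)).inter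
          (isClosed_le (hsumcont _) continuous_const)
    · rw [Set.setOf_and]
      apply IsClosed.inter
      · rw [Set.setOf_forall]
        apply isClosed_iInter
        intro e
        exact isClosed_le continuous_const (continuous_apply e)
      · rw [Set.setOf_forall]
        apply isClosed_iInter
        intro A
        exact isClosed_le (hsumcont _) continuous_const
  have hcomp : IsCompact RHS := by
    have hbox : IsCompact (Set.univ.pi (fun _ : V => Set.Icc (0:ℝ) 1)) :=
      isCompact_univ_pi (fun _ => isCompact_Icc)
    apply hbox.of_isClosed_subset hclosed
    intro x hx
    rw [hRHSmem] at hx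
    intro e _
    exact ⟨(hx.1 e).1, (hx.1 e).2⟩
  -- extreme points of RHS are feasible indicators
  have hext : RHS.extremePoints ℝ ⊆ Feas := by
    intro x hx
    obtain ⟨hxRHS, hxext⟩ := hx
    rw [hRHSmem] at hxRHS
    obtain ⟨hx01, hxcol, hxrank⟩ := hxRHS
    -- integrality
    have hint : ∀ e, x e = 0 ∨ x e = 1 := by
      by_contra hcontra
      push_neg at hcontra
      obtain ⟨e, he0, he1⟩ := hcontra
      obtain ⟨d, hdne, hd1, hd2, hd3, hd4⟩ :=
        exists_perturbation color ℓ u M x hx01 hxcol hxrank ⟨e, he0, he1⟩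
      have hyp : (fun e => x e + d e) ∈ RHS := by
        rw [hRHSmem]
        exact ⟨hd1, fun c => (hd3 c).1, fun A => (hd4 A).1⟩
      have hyq : (fun e => x e - d e) ∈ RHS := by
        rw [hRHSmem]
        exact ⟨hd2, fun c => (hd3 c).2, fun A => (hd4 A).2⟩
      have hseg : x ∈ openSegment ℝ (fun e => x e + d e) (fun e => x e - d e) := by
        refine ⟨1/2, 1/2, by norm_num, by norm_num, by norm_num, ?_⟩
        funext f
        simp only [Pi.add_apply, Pi.smul_apply, smul_eq_mul]
        ring
      have := hxext hyp hyq hseg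
      apply hdne
      funext f
      have hf := congrFun this f
      have : d f = 0 := by linarith [hf]
      simpa using this
    -- build the set S
    set S : Finset V := Finset.univ.filter (fun e => x e = 1) with hSdef
    have hxind : x = fun e => if e ∈ S then (1:ℝ) else 0 := by
      funext e
      rcases hint e with h | h
      · have : e ∉ S := by simp [hSdef]; intro hc; rw [h] at hc; norm_num at hc
        simp [this, h]
      · have : e ∈ S := by simp [hSdef, h]
        simp [this, h]
    have hsums : ∀ A : Finset V, ∑ e ∈ A, x e = ((A ∩ S).card : ℝ) := by
      intro A
      rw [hxind]
      exact sum_ind S A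
    refine ⟨S, ?_, ?_, hxind⟩
    · -- independence
      have h1 := hxrank S
      rw [hsums S, Finset.inter_self] at h1
      have h2 : S.card ≤ M.rank S := by exact_mod_cast h1
      have h3 : M.rank S ≤ S.card := by
        have := M.card_le_rank (A := S) (I := S) Finset.Subset.rfl
        -- rank ≤ card always
        obtain ⟨I, hIS, hI, hIc⟩ : ∃ I ⊆ S, M.Indep I ∧ I.card = M.rank S := by
          have hne : {n : ℕ | ∃ I ⊆ S, M.Indep I ∧ I.card = n}.Nonempty :=
            ⟨0, ∅, Finset.empty_subset _, M.empty_indep, Finset.card_empty⟩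
          have hbdd : BddAbove {n : ℕ | ∃ I ⊆ S, M.Indep I ∧ I.card = n} := by
            refine ⟨S.card, fun n hn => ?_⟩
            obtain ⟨I, hIA, _, rfl⟩ := hn
            exact Finset.card_le_card hIA
          exact Nat.sSup_mem hne hbdd
        rw [← hIc]
        exact Finset.card_le_card hIS
      exact M.indep_of_rank_eq_card (by omega)
    · -- color bounds
      intro c
      obtain ⟨h1, h2⟩ := hxcol c
      rw [hsums] at h1 h2
      have hseteq : Finset.univ.filter (fun e => color e = c) ∩ S =
          S.filter (fun v => color v = c) := by
        ext f; simp only [Finset.mem_inter, Finset.mem_filter, Finset.mem_univ, true_and]; tauto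
      rw [hseteq] at h1 h2
      exact ⟨by exact_mod_cast h1, by exact_mod_cast h2⟩
  -- conclude
  apply Set.Subset.antisymm
  · exact convexHull_min hFeasSub hconv
  · have hKM := closure_convexHull_extremePoints hcomp hconv
    have hFeasFin : Feas.Finite := by
      apply Set.Finite.subset (Set.finite_range
        (fun S : Finset V => fun e => if e ∈ S then (1:ℝ) else 0))
      rintro x ⟨S, _, _, rfl⟩
      exact ⟨S, rfl⟩
    have hclosedhull : IsClosed (convexHull ℝ Feas) := hFeasFin.isClosed_convexHull ℝ
    calc RHS = closure (convexHull ℝ (RHS.extremePoints ℝ)) := hKM.symm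
    _ ⊆ closure (convexHull ℝ Feas) := closure_mono (convexHull_mono hext)
    _ = convexHull ℝ Feas := hclosedhull.closure_eq
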